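/- Assume the maximal operator \sigma^{\#} f = \sup_k |\sigma_{M_k} f| is bounded from H_p to L_p for all p > 0, and \sigma^* f = \sup_n |\sigma_n f| is bounded from H_p to L_p for p > 1/2. Then for 1/2 < p \leq 1, \|\sigma_n f\|_{H_p} \leq c_p \|f\|_{H_p} for all n, where \|g\|_{H_p} = \|\sup_k S_{M_k} g\|_p. -/

import Mathlib

/-!
By orthonormality of the Vilenkin system, `σ_n f = ∑_{j<n} (1 - j/n) f̂(j) ψ_j`, so its partial
sums are explicit: `S_N σ_n f = σ_n f` for `N ≥ n`, while for `N ≤ n`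
`S_N σ_n f = (N/n) σ_N f + (1 - N/n) S_N f` is a convex combination. Taking `N = M_k` gives
`sup_k |S_{M_k} σ_n f| ≤ σ^# f + sup_k |S_{M_k} f| + σ^* f` pointwise, and since `t ↦ t^p` is
subadditive for `p ≤ 1`, the `p`-th power of the `H_p` quasi-norm of `σ_n f` is bounded by the
sum of the `p`-th powers of the three `L_p` quasi-norms, each at most a constant times `‖f‖_{H_p}`.
-/

open MeasureTheory Complex Filter
open scoped Classical
open scoped ENNReal NNReal

noncomputable section

def vM (m : ℕ → ℕ) : ℕ → ℕ
  | 0 => 1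
  | n + 1 => m n * vM m n

abbrev VG (m : ℕ → ℕ) := ∀ k : ℕ, Fin (m k)

def vdigit (m : ℕ → ℕ) (n j : ℕ) : ℕ := (n / vM m j) % m j

def vpsi (m : ℕ → ℕ) (n : ℕ) (x : VG m) : ℂ :=
  ∏ k ∈ Finset.range (n + 1),
    Complex.exp (2 * Real.pi * Complex.I * (vdigit m n k) * ((x k : ℕ) : ℂ) / (m k))

def vD (m : ℕ → ℕ) (n : ℕ) (x : VG m) : ℂ := ∑ k ∈ Finset.range n, vpsi m k x

variable {m : ℕ → ℕ}

def vCoeff (μ : Measure (VG m)) (f : VG m → ℂ) (i : ℕ) : ℂ :=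
  ∫ x, f x * (starRingEnd ℂ) (vpsi m i x) ∂μ

def vS (μ : Measure (VG m)) (f : VG m → ℂ) (n : ℕ) (x : VG m) : ℂ :=
  ∑ k ∈ Finset.range n, vCoeff μ f k * vpsi m k x

def vSigma (μ : Measure (VG m)) (f : VG m → ℂ) (n : ℕ) (x : VG m) : ℂ :=
  (n : ℂ)⁻¹ * ∑ k ∈ Finset.Icc 1 n, vS μ f k x

def vCyl (m : ℕ → ℕ) (n : ℕ) (x : VG m) : Set (VG m) := {y | ∀ i < n, y i = x i}

def vI (m : ℕ → ℕ) (n : ℕ) : Set (VG m) := {y | ∀ i < n, (y i : ℕ) = 0}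

def isVHaar (μ : Measure (VG m)) : Prop :=
  ∀ n (x : VG m), μ (vCyl m n x) = ((vM m n : ℝ≥0∞))⁻¹

def vHp (μ : Measure (VG m)) (p : ℝ) (f : VG m → ℂ) : ℝ≥0∞ :=
  (∫⁻ x, (⨆ k, ENNReal.ofReal (‖vS μ f (vM m k) x‖)) ^ p ∂μ) ^ (1 / p)

def vLpE (μ : Measure (VG m)) (p : ℝ) (g : VG m → ℝ≥0∞) : ℝ≥0∞ :=
  (∫⁻ x, (g x) ^ p ∂μ) ^ (1 / p)

/-- The maximal operator `σ^# f = sup_k |σ_{M_k} f|`. -/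
def sigSharp (μ : Measure (VG m)) (f : VG m → ℂ) (x : VG m) : ℝ≥0∞ :=
  ⨆ k, ENNReal.ofReal (‖vSigma μ f (vM m k) x‖)

/-- The maximal operator `σ^* f = sup_{n ≥ 1} |σ_n f|`. -/
def sigStar (μ : Measure (VG m)) (f : VG m → ℂ) (x : VG m) : ℝ≥0∞ :=
  ⨆ n : ℕ, ENNReal.ofReal (‖vSigma μ f (n + 1) x‖)

open Finset

lemma vM_pos (hm : ∀ k, 0 < m k) (k : ℕ) : 0 < vM m k := by
  induction k with
  | zero => exact Nat.one_pos
  | succ k ih => exact Nat.mul_pos (hm k) ih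

lemma lt_vM (hm : ∀ k, 2 ≤ m k) (k : ℕ) : k < vM m k := by
  induction k with
  | zero => exact Nat.one_pos
  | succ k ih =>
    have : 2 * vM m k ≤ m k * vM m k := Nat.mul_le_mul_right _ (hm k)
    simp only [vM]
    omega

lemma vM_eq_prod (N : ℕ) : vM m N = ∏ k ∈ range N, m k := by
  induction N with
  | zero => rfl
  | succ N ih => rw [prod_range_succ, ← ih, vM, mul_comm]

lemma vdigit_eq_zero_of_lt {n j : ℕ} (h : n < vM m j) : vdigit m n j = 0 := by
  simp [vdigit, Nat.div_eq_of_lt h]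

lemma mod_vM_eq_of_vdigit_eq {i j N : ℕ} (h : ∀ k < N, vdigit m i k = vdigit m j k) :
    i % vM m N = j % vM m N := by
  induction N with
  | zero => simp [vM, Nat.mod_one]
  | succ N ih =>
    have hN := h N N.lt_succ_self
    simp only [vdigit] at hN
    rw [vM, mul_comm, Nat.mod_mul, Nat.mod_mul, ih fun k hk => h k (by omega), hN]

lemma eq_of_vdigit_eq {i j N : ℕ} (hi : i < vM m N) (hj : j < vM m N)
    (h : ∀ k < N, vdigit m i k = vdigit m j k) : i = j := by
  simpa [Nat.mod_eq_of_lt hi, Nat.mod_eq_of_lt hj] using mod_vM_eq_of_vdigit_eq h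

lemma sum_exp_mul_conj_exp {q d d' : ℕ} (hd : d < q) (hd' : d' < q) :
    ∑ a : Fin q, Complex.exp (2 * Real.pi * Complex.I * d * (a : ℕ) / q) *
      (starRingEnd ℂ) (Complex.exp (2 * Real.pi * Complex.I * d' * (a : ℕ) / q)) =
    if d = d' then (q : ℂ) else 0 := by
  have hq : q ≠ 0 := by omega
  set ζ := Complex.exp (2 * Real.pi * Complex.I / q) with hζ_def
  have hζ : IsPrimitiveRoot ζ q := Complex.isPrimitiveRoot_exp q hq
  set z := ζ ^ ((d : ℤ) - d') with hz_def
  have hterm (a : ℕ) : Complex.exp (2 * Real.pi * Complex.I * d * a / q) *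
      (starRingEnd ℂ) (Complex.exp (2 * Real.pi * Complex.I * d' * a / q)) = z ^ a := by
    rw [hz_def, hζ_def, ← Complex.exp_conj, ← Complex.exp_add, ← Complex.exp_int_mul,
      ← Complex.exp_nat_mul]
    congr 1
    simp only [map_div₀, map_mul, map_ofNat, Complex.conj_ofReal, Complex.conj_I, map_natCast]
    push_cast
    ring
  simp only [hterm, Fin.sum_univ_eq_sum_range (z ^ ·)]
  split_ifs with hdd
  · simp [z, hdd]
  · have hz : z ≠ 1 := by
      rw [Ne, hζ.zpow_eq_one_iff_dvd]
      intro hdvd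
      have := Int.eq_zero_of_dvd_of_natAbs_lt_natAbs hdvd (by omega)
      omega
    have hzq : z ^ q = 1 := by
      rw [← zpow_natCast, ← zpow_mul, mul_comm, zpow_mul, zpow_natCast, hζ.pow_eq_one, one_zpow]
    rw [geom_sum_eq hz, hzq, sub_self, zero_div]

section Haar

variable {μ : Measure (VG m)}

lemma measurable_vpsi (n : ℕ) : Measurable (vpsi m n) :=
  Finset.measurable_prod _ fun k _ =>
    (measurable_of_countable fun a : Fin (m k) => Complex.exp
      (2 * Real.pi * Complex.I * vdigit m n k * (a : ℕ) / m k)).comp (measurable_pi_apply k)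

lemma norm_vpsi (n : ℕ) (x : VG m) : ‖vpsi m n x‖ = 1 := by
  rw [vpsi, norm_prod]
  refine prod_eq_one fun k _ => ?_
  rw [Complex.norm_exp]
  simp

lemma integrable_vpsi_mul_conj [IsFiniteMeasure μ] (i j : ℕ) :
    Integrable (fun x => vpsi m j x * (starRingEnd ℂ) (vpsi m i x)) μ :=
  Integrable.of_bound ((measurable_vpsi j).mul
      (Complex.continuous_conj.measurable.comp (measurable_vpsi i))).aestronglyMeasurable 1
    (ae_of_all _ fun x => by simp [norm_vpsi])

lemma integral_comp_restrict [IsProbabilityMeasure μ] (hμ : isVHaar μ) (N : ℕ)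
    (g : (∀ k : Fin N, Fin (m k)) → ℂ) :
    ∫ x, g (fun k => x k) ∂μ = (vM m N : ℂ)⁻¹ * ∑ c, g c := by
  set π : VG m → ∀ k : Fin N, Fin (m k) := fun x k => x k
  have hπ : Measurable π := measurable_pi_lambda _ fun k => measurable_pi_apply _
  obtain ⟨y⟩ := nonempty_of_isProbabilityMeasure μ
  have hfiber (c) : μ (π ⁻¹' {c}) = (vM m N : ℝ≥0∞)⁻¹ := by
    rw [← hμ N fun i => if h : i < N then c ⟨i, h⟩ else y i]
    congr 1
    ext x
    simp +contextual [π, vCyl, funext_iff, Fin.forall_iff]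
  rw [← integral_map hπ.aemeasurable (measurable_of_countable g).aestronglyMeasurable,
    integral_fintype Integrable.of_finite, mul_sum]
  refine sum_congr rfl fun c _ => ?_
  rw [measureReal_def, Measure.map_apply hπ (measurableSet_singleton c), hfiber, Complex.real_smul]
  simp

lemma integral_prod_range [IsProbabilityMeasure μ] (hμ : isVHaar μ) (N : ℕ)
    (g : ∀ k, Fin (m k) → ℂ) :
    ∫ x, ∏ k ∈ range N, g k (x k) ∂μ = ∏ k ∈ range N, ((m k : ℂ)⁻¹ * ∑ a, g k a) := by
  have h := integral_comp_restrict hμ N fun c => ∏ k : Fin N, g k (c k)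
  simp only [← Fintype.piFinset_univ, ← prod_univ_sum,
    fun x : VG m => Fin.prod_univ_eq_prod_range (fun k => g k (x k)) N] at h
  rw [h, vM_eq_prod, Nat.cast_prod, ← prod_inv_distrib, prod_mul_distrib,
    Fin.prod_univ_eq_prod_range (fun k => ∑ a, g k a)]

lemma vpsi_eq_prod_range (hm : ∀ k, 2 ≤ m k) {n N : ℕ} (h : n < N) (x : VG m) :
    vpsi m n x = ∏ k ∈ range N,
      Complex.exp (2 * Real.pi * Complex.I * (vdigit m n k) * ((x k : ℕ) : ℂ) / (m k)) := by
  refine prod_subset (range_subset_range.mpr h) fun k _ hk => ?_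
  have hnk : n < k := by simpa using hk
  simp [vdigit_eq_zero_of_lt (hnk.trans (lt_vM hm k))]

lemma integral_vpsi_mul_conj [IsProbabilityMeasure μ] (hm : ∀ k, 2 ≤ m k) (hμ : isVHaar μ)
    (i j : ℕ) : ∫ x, vpsi m j x * (starRingEnd ℂ) (vpsi m i x) ∂μ = if i = j then 1 else 0 := by
  set N := max i j + 1
  have hmk (k : ℕ) : (m k : ℂ) ≠ 0 := Nat.cast_ne_zero.mpr (by linarith [hm k])
  have hsum (k : ℕ) := sum_exp_mul_conj_exp (q := m k) (d := vdigit m j k) (d' := vdigit m i k)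
    (Nat.mod_lt _ (by linarith [hm k])) (Nat.mod_lt _ (by linarith [hm k]))
  simp_rw [vpsi_eq_prod_range hm (show j < N by omega),
    vpsi_eq_prod_range hm (show i < N by omega), map_prod, ← prod_mul_distrib]
  rw [integral_prod_range hμ N fun k a =>
    Complex.exp (2 * Real.pi * Complex.I * (vdigit m j k) * ((a : ℕ) : ℂ) / (m k)) *
      (starRingEnd ℂ)
        (Complex.exp (2 * Real.pi * Complex.I * (vdigit m i k) * ((a : ℕ) : ℂ) / (m k)))]
  simp_rw [hsum, mul_ite, inv_mul_cancel₀ (hmk _), mul_zero, prod_boole, mem_range]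
  have hdigits : (∀ k < N, vdigit m j k = vdigit m i k) ↔ i = j :=
    ⟨fun h => (eq_of_vdigit_eq ((show j < N by omega).trans (lt_vM hm N))
      ((show i < N by omega).trans (lt_vM hm N)) h).symm, fun h _ _ => h ▸ rfl⟩
  simp only [hdigits]

end Haar

lemma sum_Icc_sum_range {M : Type*} [AddCommMonoid M] (g : ℕ → M) (n : ℕ) :
    ∑ k ∈ Icc 1 n, ∑ j ∈ range k, g j = ∑ j ∈ range n, (n - j) • g j := by
  induction n with
  | zero => simp
  | succ n ih =>
    have hstep : ∀ j ∈ range n, (n + 1 - j) • g j = (n - j) • g j + g j := fun j hj => by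
      rw [show n + 1 - j = n - j + 1 by have := mem_range.1 hj; omega, succ_nsmul]
    rw [sum_Icc_succ_top (by omega), ih, sum_range_succ, sum_range_succ, sum_congr rfl hstep,
      sum_add_distrib]
    simp only [Nat.add_sub_cancel_left, one_smul]
    abel

section Fejer

variable {μ : Measure (VG m)}

lemma vSigma_eq_sum (f : VG m → ℂ) (n : ℕ) :
    vSigma μ f n = fun x => ∑ j ∈ range n, ((n - j : ℕ) / n * vCoeff μ f j) * vpsi m j x := by
  funext x
  rw [vSigma]
  simp only [vS]
  rw [sum_Icc_sum_range, mul_sum]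
  refine sum_congr rfl fun j _ => ?_
  rw [nsmul_eq_mul]
  ring

variable [IsProbabilityMeasure μ] (hm : ∀ k, 2 ≤ m k) (hμ : isVHaar μ)
include hm hμ

lemma vCoeff_sum_vpsi (a : ℕ → ℂ) (n i : ℕ) :
    vCoeff μ (fun x => ∑ j ∈ range n, a j * vpsi m j x) i = if i < n then a i else 0 := by
  simp only [vCoeff, sum_mul, mul_assoc]
  rw [integral_finsetSum _ fun j _ => (integrable_vpsi_mul_conj i j).const_mul (a j)]
  simp only [integral_const_mul, integral_vpsi_mul_conj hm hμ, mul_ite, mul_one, mul_zero,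
    sum_ite_eq, mem_range]

lemma vS_sum_vpsi (a : ℕ → ℂ) (n N : ℕ) :
    vS μ (fun x => ∑ j ∈ range n, a j * vpsi m j x) N =
      fun x => ∑ j ∈ range (min N n), a j * vpsi m j x := by
  funext x
  simp only [vS, vCoeff_sum_vpsi hm hμ, ite_mul, zero_mul]
  rw [← sum_filter]
  congr 1
  ext j
  simp

lemma vS_vSigma_of_le (f : VG m → ℂ) {n N : ℕ} (h : n ≤ N) :
    vS μ (vSigma μ f n) N = vSigma μ f n := by
  rw [vSigma_eq_sum, vS_sum_vpsi hm hμ, min_eq_right h]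

lemma vS_vSigma_of_ge (f : VG m → ℂ) {n N : ℕ} (hN : 0 < N) (h : N ≤ n) (x : VG m) :
    vS μ (vSigma μ f n) N x =
      (N / n : ℂ) * vSigma μ f N x + ((n - N : ℕ) / n : ℂ) * vS μ f N x := by
  rw [vSigma_eq_sum f n, vS_sum_vpsi hm hμ, min_eq_left h, vSigma_eq_sum f N]
  simp only [vS]
  rw [mul_sum, mul_sum, ← sum_add_distrib]
  refine sum_congr rfl fun j hj => ?_
  have hj : j < N := mem_range.1 hj
  have hN' : (N : ℂ) ≠ 0 := Nat.cast_ne_zero.mpr hN.ne'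
  have hn' : (n : ℂ) ≠ 0 := Nat.cast_ne_zero.mpr (by omega)
  push_cast [Nat.cast_sub h, Nat.cast_sub hj.le, Nat.cast_sub (hj.le.trans h)]
  field_simp
  ring

lemma norm_vS_vSigma_le_of_ge (f : VG m → ℂ) {n N : ℕ} (hN : 0 < N) (h : N ≤ n) (x : VG m) :
    ‖vS μ (vSigma μ f n) N x‖ ≤ ‖vSigma μ f N x‖ + ‖vS μ f N x‖ := by
  have hcoeff {k : ℕ} (hk : k ≤ n) : ‖(k / n : ℂ)‖ ≤ 1 := by
    rw [norm_div, Complex.norm_natCast, Complex.norm_natCast]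
    exact div_le_one_of_le₀ (by exact_mod_cast hk) (Nat.cast_nonneg n)
  rw [vS_vSigma_of_ge hm hμ f hN h]
  refine (norm_add_le _ _).trans (add_le_add ?_ ?_) <;> rw [norm_mul] <;>
    exact mul_le_of_le_one_left (norm_nonneg _) (hcoeff (by omega))

end Fejer

section Maximal

variable {μ : Measure (VG m)}

def vSmax (μ : Measure (VG m)) (f : VG m → ℂ) (x : VG m) : ℝ≥0∞ :=
  ⨆ k, ENNReal.ofReal ‖vS μ f (vM m k) x‖

lemma vHp_eq_vLpE_vSmax (p : ℝ) (f : VG m → ℂ) : vHp μ p f = vLpE μ p (vSmax μ f) := rfl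

lemma measurable_vS (f : VG m → ℂ) (n : ℕ) : Measurable (vS μ f n) :=
  Finset.measurable_sum _ fun j _ => (measurable_vpsi j).const_mul _

lemma measurable_vSigma (f : VG m → ℂ) (n : ℕ) : Measurable (vSigma μ f n) :=
  (Finset.measurable_sum _ fun j _ => measurable_vS f j).const_mul _

lemma measurable_vSmax (f : VG m → ℂ) : Measurable (vSmax μ f) :=
  Measurable.iSup fun _ => ENNReal.measurable_ofReal.comp (measurable_vS f _).norm

lemma measurable_sigSharp (f : VG m → ℂ) : Measurable (sigSharp μ f) :=
  Measurable.iSup fun _ => ENNReal.measurable_ofReal.comp (measurable_vSigma f _).norm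

lemma ofReal_norm_vSigma_le_sigStar (f : VG m → ℂ) {n : ℕ} (hn : 0 < n) (x : VG m) :
    ENNReal.ofReal ‖vSigma μ f n x‖ ≤ sigStar μ f x := by
  obtain ⟨n, rfl⟩ : ∃ j, n = j + 1 := ⟨n - 1, by omega⟩
  exact le_iSup (fun j : ℕ => ENNReal.ofReal ‖vSigma μ f (j + 1) x‖) n

/-- Below `n` the partial sums of `σ_n f` are convex combinations of `σ_N f` and `S_N f`;
above `n` they reproduce `σ_n f`. -/
lemma vSmax_vSigma_le [IsProbabilityMeasure μ] (hm : ∀ k, 2 ≤ m k) (hμ : isVHaar μ)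
    (f : VG m → ℂ) {n : ℕ} (hn : 0 < n) (x : VG m) :
    vSmax μ (vSigma μ f n) x ≤ sigSharp μ f x + vSmax μ f x + sigStar μ f x := by
  refine iSup_le fun k => ?_
  rcases le_or_gt n (vM m k) with h | h
  · rw [vS_vSigma_of_le hm hμ f h]
    exact (ofReal_norm_vSigma_le_sigStar f hn x).trans le_add_self
  · calc ENNReal.ofReal ‖vS μ (vSigma μ f n) (vM m k) x‖
        ≤ ENNReal.ofReal ‖vSigma μ f (vM m k) x‖ + ENNReal.ofReal ‖vS μ f (vM m k) x‖ :=
          (ENNReal.ofReal_le_ofReal (norm_vS_vSigma_le_of_ge hm hμ f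
            (vM_pos (fun j => zero_lt_two.trans_le (hm j)) k) h.le x)).trans
            ENNReal.ofReal_add_le
      _ ≤ sigSharp μ f x + vSmax μ f x :=
          add_le_add (le_iSup (fun j => ENNReal.ofReal ‖vSigma μ f (vM m j) x‖) k)
            (le_iSup (fun j => ENNReal.ofReal ‖vS μ f (vM m j) x‖) k)
      _ ≤ _ := le_self_add

end Maximal

lemma lintegral_rpow_add_le {α : Type*} [MeasurableSpace α] {μ : Measure α} {p : ℝ}
    (hp0 : 0 ≤ p) (hp1 : p ≤ 1) {f g : α → ℝ≥0∞} (hf : AEMeasurable f μ) :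
    ∫⁻ x, (f x + g x) ^ p ∂μ ≤ ∫⁻ x, f x ^ p ∂μ + ∫⁻ x, g x ^ p ∂μ :=
  (lintegral_mono fun _ => ENNReal.rpow_add_le_add_rpow _ _ hp0 hp1).trans_eq
    (lintegral_add_left' (hf.pow_const p) _)

lemma vLpE_rpow {μ : Measure (VG m)} {p : ℝ} (hp : 0 < p) (g : VG m → ℝ≥0∞) :
    vLpE μ p g ^ p = ∫⁻ x, g x ^ p ∂μ := by
  rw [vLpE, ← ENNReal.rpow_mul, one_div, inv_mul_cancel₀ hp.ne', ENNReal.rpow_one]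

lemma vLpE_rpow_le_of_le_add {μ : Measure (VG m)} {p : ℝ} (hp0 : 0 < p) (hp1 : p ≤ 1)
    {g F G H : VG m → ℝ≥0∞} (hF : Measurable F) (hG : Measurable G)
    (h : ∀ x, g x ≤ F x + G x + H x) :
    vLpE μ p g ^ p ≤ vLpE μ p F ^ p + vLpE μ p G ^ p + vLpE μ p H ^ p := by
  simp only [vLpE_rpow hp0]
  calc ∫⁻ x, g x ^ p ∂μ ≤ ∫⁻ x, (F x + G x + H x) ^ p ∂μ :=
        lintegral_mono fun x => ENNReal.rpow_le_rpow (h x) hp0.le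
    _ ≤ ∫⁻ x, (F x + G x) ^ p ∂μ + ∫⁻ x, H x ^ p ∂μ :=
        lintegral_rpow_add_le hp0.le hp1 (hF.add hG).aemeasurable
    _ ≤ _ := by
        gcongr
        exact lintegral_rpow_add_le hp0.le hp1 hF.aemeasurable

theorem sigma_Hp_bounded_of_maximal_general (m : ℕ → ℕ) (hm : ∀ k, 2 ≤ m k)
    (μ : Measure (VG m)) [IsProbabilityMeasure μ] (hμ : isVHaar μ)
    (hsharp : ∀ p : ℝ, 0 < p → ∃ C : ℝ≥0, ∀ f : VG m → ℂ, Integrable f μ →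
      vLpE μ p (sigSharp μ f) ≤ C * vHp μ p f)
    (hstar : ∀ p : ℝ, 1 / 2 < p → ∃ C : ℝ≥0, ∀ f : VG m → ℂ, Integrable f μ →
      vLpE μ p (sigStar μ f) ≤ C * vHp μ p f) :
    ∀ p : ℝ, 1 / 2 < p → p ≤ 1 → ∃ C : ℝ≥0, ∀ f : VG m → ℂ, Integrable f μ →
      ∀ n : ℕ, 1 ≤ n → vHp μ p (vSigma μ f n) ≤ C * vHp μ p f := by
  intro p hp hp1
  have hp0 : 0 < p := by linarith
  obtain ⟨C₁, hC₁⟩ := hsharp p hp0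
  obtain ⟨C₂, hC₂⟩ := hstar p hp
  refine ⟨(C₁ ^ p + 1 + C₂ ^ p) ^ p⁻¹, fun f hf n hn => ?_⟩
  rw [← ENNReal.rpow_le_rpow_iff hp0, vHp_eq_vLpE_vSmax]
  calc vLpE μ p (vSmax μ (vSigma μ f n)) ^ p
      ≤ vLpE μ p (sigSharp μ f) ^ p + vHp μ p f ^ p + vLpE μ p (sigStar μ f) ^ p :=
        vLpE_rpow_le_of_le_add hp0 hp1 (measurable_sigSharp f) (measurable_vSmax f)
          (vSmax_vSigma_le hm hμ f hn)
    _ ≤ (C₁ * vHp μ p f) ^ p + vHp μ p f ^ p + (C₂ * vHp μ p f) ^ p := by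
        gcongr
        exacts [hC₁ f hf, hC₂ f hf]
    _ = (((C₁ ^ p + 1 + C₂ ^ p) ^ p⁻¹ : ℝ≥0) * vHp μ p f) ^ p := by
        have hC : (((C₁ ^ p + 1 + C₂ ^ p) ^ p⁻¹ : ℝ≥0) : ℝ≥0∞) ^ p = C₁ ^ p + 1 + C₂ ^ p := by
          rw [← ENNReal.coe_rpow_of_nonneg _ hp0.le, NNReal.rpow_inv_rpow hp0.ne']
          push_cast [ENNReal.coe_rpow_of_nonneg _ hp0.le]
          rfl
        simp only [ENNReal.mul_rpow_of_nonneg _ _ hp0.le, hC]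
        ring

/-- boundedness of `σ^#` (all `p > 0`) and `σ^*` (`p > 1/2`) from `H_p` to
`L_p` implies `‖σ_n f‖_{H_p} ≤ c_p ‖f‖_{H_p}` for `1/2 < p ≤ 1`. -/
theorem sigma_Hp_bounded_of_maximal (m : ℕ → ℕ) (hm : ∀ k, 2 ≤ m k) (hb : ∃ B, ∀ k, m k ≤ B)
    (μ : Measure (VG m)) [IsProbabilityMeasure μ] (hμ : isVHaar μ)
    (hsharp : ∀ p : ℝ, 0 < p → ∃ C : ℝ≥0, ∀ f : VG m → ℂ, Integrable f μ →
      vLpE μ p (sigSharp μ f) ≤ C * vHp μ p f)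
    (hstar : ∀ p : ℝ, 1 / 2 < p → ∃ C : ℝ≥0, ∀ f : VG m → ℂ, Integrable f μ →
      vLpE μ p (sigStar μ f) ≤ C * vHp μ p f) :
    ∀ p : ℝ, 1 / 2 < p → p ≤ 1 → ∃ C : ℝ≥0, ∀ f : VG m → ℂ, Integrable f μ →
      ∀ n : ℕ, 1 ≤ n → vHp μ p (vSigma μ f n) ≤ C * vHp μ p f :=
  sigma_Hp_bounded_of_maximal_general m hm μ hμ hsharp hstar

end
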